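/- Let n ≥ 1 and let μ be a weak composition of n. In the weighted boolean algebra B_n^w (whose closed intervals are finite), the Möbius function satisfies μ_P(0̂, ([n],μ)) = (−1)^n · |Ninc_μ|. -/

import Mathlib

/-- The weighted boolean algebra `B_n^w`. -/
@[ext] structure WSub (n : ℕ) where
  carrier : Finset (Fin n)
  wt : Multiset ℕ
  card_eq : Multiset.card wt = carrier.card

instance {n : ℕ} : PartialOrder (WSub n) where
  le p q := p.carrier ⊆ q.carrier ∧ p.wt ≤ q.wt
  le_refl p := ⟨subset_rfl, le_rfl⟩
  le_trans a b c hab hbc := ⟨hab.1.trans hbc.1, hab.2.trans hbc.2⟩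
  le_antisymm a b hab hba :=
    WSub.ext (Finset.Subset.antisymm hab.1 hba.1) (le_antisymm hab.2 hba.2)

def content {n : ℕ} (c : Fin n → ℕ) : Multiset ℕ := Finset.univ.val.map c

/-- An ascent of the colored permutation `(σ, c)`. -/
def HasAscent {n : ℕ} {C : Type*} [Preorder C] (σ : Equiv.Perm (Fin n)) (c : Fin n → C) : Prop :=
  ∃ i : ℕ, ∃ h : i + 1 < n,
    σ ⟨i, Nat.lt_of_succ_lt h⟩ < σ ⟨i + 1, h⟩ ∧
      c (σ ⟨i, Nat.lt_of_succ_lt h⟩) ≤ c (σ ⟨i + 1, h⟩)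

/-!
By Philip Hall's theorem, `μ(0̂, z) = ∑ (-1)^k` over the strict chains `0̂ = z₀ < ⋯ < z_k = z`.
A step `z_{i-1} < z_i` adds a nonempty set `D` of elements with a multiset `e` of colors,
`|D| = |e|`; zipping the sorted `D` with the sorted `e` encodes it bijectively as a nonempty word
of letters (element, color) in which consecutive letters form ascents. Chains to `z` thus become
block sequences: lists of such words whose letters make up `z`. Their signed count satisfies the
Möbius recursion directly, since appending the complementary block, or dropping the last block
when nothing is left to complement, is a sign-reversing involution on the block sequences below
any `z ≠ 0̂`.

A second sign-reversing involution evaluates the count: split off the first letter of the first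
block or, when the first block is a single letter forming an ascent with the next block, merge
the two; otherwise keep the first block and recurse. What survives are the decompositions into
singletons of words without ascents, i.e. of the ascent-free colored permutations, each of sign
`(-1)^n`.
-/

theorem Finset.sum_neg_one_pow_eq_zero_of_involution {ι : Type*} {s : Finset ι} (ℓ : ι → ℕ)
    (g : ι → ι) (hg_mem : ∀ x ∈ s, g x ∈ s) (hg_inv : ∀ x ∈ s, g (g x) = x)
    (hℓ : ∀ x ∈ s, ℓ (g x) = ℓ x + 1 ∨ ℓ x = ℓ (g x) + 1) :
    ∑ x ∈ s, (-1 : ℤ) ^ ℓ x = 0 := by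
  refine Finset.sum_involution (fun x _ => g x) (fun x hx => ?_) (fun x hx _ hgx => ?_)
    hg_mem hg_inv
  · rcases hℓ x hx with h | h <;> rw [h] <;> ring
  · have := hℓ x hx
    rw [hgx] at this
    omega

theorem eq_of_sum_Iic_eq_zero {P M : Type*} [PartialOrder P] [OrderBot P] [WellFoundedLT P]
    [AddCommGroup M] (I : P → Finset P) (hI : ∀ y z, z ∈ I y ↔ z ≤ y) {f g : P → M}
    (hbot : f ⊥ = g ⊥) (hf : ∀ y ≠ ⊥, ∑ z ∈ I y, f z = 0) (hg : ∀ y ≠ ⊥, ∑ z ∈ I y, g z = 0)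
    (y : P) : f y = g y := by
  classical
  induction y using WellFoundedLT.induction with
  | _ y ih =>
  rcases eq_or_ne y ⊥ with rfl | hy
  · exact hbot
  have hy_mem : y ∈ I y := (hI y y).2 le_rfl
  have hlower : ∑ z ∈ (I y).erase y, f z = ∑ z ∈ (I y).erase y, g z :=
    Finset.sum_congr rfl fun z hz => ih z <|
      lt_of_le_of_ne ((hI y z).1 (Finset.mem_of_mem_erase hz)) (Finset.ne_of_mem_erase hz)
  have hfy := hf y hy
  have hgy := hg y hy
  rw [← Finset.add_sum_erase _ _ hy_mem] at hfy hgy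
  rw [hlower] at hfy
  exact add_right_cancel (hfy.trans hgy.symm)

theorem List.finite_setOf_length_le_forall_mem {α : Type*} {K : Set α} (hK : K.Finite) (N : ℕ) :
    {l : List α | l.length ≤ N ∧ ∀ a ∈ l, a ∈ K}.Finite := by
  have := hK.to_subtype
  refine ((List.finite_length_le K N).image (List.map Subtype.val)).subset ?_
  rintro l ⟨hl, hlK⟩
  exact ⟨l.attachWith _ hlK, by simpa using hl, List.attachWith_map_subtype_val hlK⟩

theorem List.IsChain.zip {α β : Type*} {R : α → α → Prop} {S : β → β → Prop} :
    ∀ {l₁ : List α} {l₂ : List β}, l₁.IsChain R → l₂.IsChain S →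
      (l₁.zip l₂).IsChain (fun p q => R p.1 q.1 ∧ S p.2 q.2)
  | a :: b :: l₁, c :: d :: l₂, h₁, h₂ => by
    rw [List.isChain_cons_cons] at h₁ h₂
    exact .cons_cons ⟨h₁.1, h₂.1⟩ (h₁.2.zip h₂.2)
  | [], _, _, _ | [_], [], _, _ | [_], _ :: _, _, _ | _ :: _ :: _, [], _, _
  | _ :: _ :: _, [_], _, _ => by simp

section Marginals

variable {α β : Type*}

def marginals (w : List (α × β)) : Multiset α × Multiset β :=
  ((w.map Prod.fst : List α), (w.map Prod.snd : List β))

@[simp] theorem marginals_nil : marginals ([] : List (α × β)) = 0 := rfl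

@[simp] theorem marginals_append (w w' : List (α × β)) :
    marginals (w ++ w') = marginals w + marginals w' := by
  simp [marginals]

@[simp] theorem card_marginals_fst (w : List (α × β)) :
    Multiset.card (marginals w).1 = w.length := by simp [marginals]

@[simp] theorem card_marginals_snd (w : List (α × β)) :
    Multiset.card (marginals w).2 = w.length := by simp [marginals]

theorem marginals_le_of_sublist {w w' : List (α × β)} (h : w.Sublist w') :
    marginals w ≤ marginals w' :=
  ⟨Multiset.coe_le.2 (h.map _).subperm, Multiset.coe_le.2 (h.map _).subperm⟩

theorem marginals_eq_zero {w : List (α × β)} : marginals w = 0 ↔ w = [] :=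
  ⟨fun h => by simpa using congrArg (Multiset.card ∘ Prod.fst) h, by rintro rfl; rfl⟩

variable [LinearOrder α] [LinearOrder β]

def IsAscent (p q : α × β) : Prop := p.1 < q.1 ∧ p.2 ≤ q.2

instance : DecidableRel (IsAscent (α := α) (β := β)) := fun _ _ => instDecidableAnd

def sortedZip (p : Multiset α × Multiset β) : List (α × β) :=
  (p.1.sort (· ≤ ·)).zip (p.2.sort (· ≤ ·))

theorem marginals_sortedZip {p : Multiset α × Multiset β}
    (hp : Multiset.card p.1 = Multiset.card p.2) : marginals (sortedZip p) = p := by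
  rw [marginals, sortedZip, List.map_fst_zip (by simp [hp]), List.map_snd_zip (by simp [hp]),
    Multiset.sort_eq, Multiset.sort_eq]

theorem isChain_sortedZip {p : Multiset α × Multiset β} (hp : p.1.Nodup) :
    (sortedZip p).IsChain IsAscent := by
  have h₁ : (p.1.sort (· ≤ ·)).SortedLT :=
    (List.sortedLE_iff_pairwise.2 (Multiset.pairwise_sort _ _)).sortedLT_of_nodup
      (by rwa [← Multiset.coe_nodup, Multiset.sort_eq])
  have h₂ : (p.2.sort (· ≤ ·)).SortedLE :=
    List.sortedLE_iff_pairwise.2 (Multiset.pairwise_sort _ _)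
  exact h₁.isChain.zip h₂.isChain

theorem sortedZip_marginals {w : List (α × β)} (hw : w.IsChain IsAscent) :
    sortedZip (marginals w) = w := by
  have h₁ : (w.map Prod.fst).SortedLT :=
    List.IsChain.sortedLT ((List.isChain_map _).2 (hw.imp fun _ _ h => h.1))
  have h₂ : (w.map Prod.snd).SortedLE :=
    List.IsChain.sortedLE ((List.isChain_map _).2 (hw.imp fun _ _ h => h.2))
  rw [sortedZip, marginals, Multiset.coe_sort, Multiset.coe_sort,
    List.mergeSort_eq_self _ h₁.sortedLE.pairwise, List.mergeSort_eq_self _ h₂.pairwise]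
  exact (List.zip_of_prod rfl rfl).symm

end Marginals

namespace List

variable {α : Type*}

def IsChainBlocks (r : α → α → Prop) (π : List (List α)) : Prop :=
  ∀ b ∈ π, b ≠ [] ∧ b.IsChain r

theorem isChainBlocks_cons {r : α → α → Prop} {b : List α} {π : List (List α)} :
    IsChainBlocks r (b :: π) ↔ (b ≠ [] ∧ b.IsChain r) ∧ IsChainBlocks r π :=
  forall_mem_cons

variable (r : α → α → Prop) [DecidableRel r]

def splitMerge : List (List α) → List (List α)
  | (x :: y :: b) :: π => [x] :: (y :: b) :: π
  | [x] :: (y :: b) :: π =>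
      if r x y then (x :: y :: b) :: π else [x] :: splitMerge ((y :: b) :: π)
  | π => π

variable {r}

theorem flatten_splitMerge (π : List (List α)) : (splitMerge r π).flatten = π.flatten := by
  fun_induction splitMerge r π <;> simp_all

theorem IsChainBlocks.splitMerge {π : List (List α)} (h : IsChainBlocks r π) :
    IsChainBlocks r (splitMerge r π) := by
  fun_induction List.splitMerge r π <;> simp_all [isChainBlocks_cons]

theorem exists_splitMerge_eq_cons_cons (y : α) (b : List α) (π : List (List α)) :
    ∃ b' π', splitMerge r ((y :: b) :: π) = (y :: b') :: π' := by
  rcases b with _ | ⟨z, b⟩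
  · rcases π with _ | ⟨_ | ⟨z, c⟩, π⟩
    · exact ⟨_, _, rfl⟩
    · exact ⟨_, _, rfl⟩
    · by_cases h : r y z <;> simp [splitMerge, h]
  · exact ⟨_, _, rfl⟩

theorem splitMerge_splitMerge {π : List (List α)} (h : IsChainBlocks r π) :
    splitMerge r (splitMerge r π) = π := by
  fun_induction List.splitMerge r π with
  | case1 x y b π => simp_all [splitMerge, isChainBlocks_cons]
  | case2 x y b π hxy => rfl
  | case3 x y b π hxy ih =>
    obtain ⟨b', π', hsm⟩ := exists_splitMerge_eq_cons_cons (r := r) y b π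
    rw [hsm, splitMerge, if_neg hxy, ← hsm, ih (isChainBlocks_cons.1 h).2]
  | case4 π h₁ h₂ =>
    rw [splitMerge.eq_def]
    split
    exacts [(h₁ _ _ _ _ rfl).elim, (h₂ _ _ _ _ rfl).elim, rfl]

theorem length_splitMerge_of_ne {π : List (List α)} (hπ : splitMerge r π ≠ π) :
    (splitMerge r π).length = π.length + 1 ∨ π.length = (splitMerge r π).length + 1 := by
  fun_induction List.splitMerge r π with
  | case1 => simp
  | case2 => simp
  | case3 x y b π hxy ih => simpa using ih (by simpa using hπ)
  | case4 => exact absurd rfl hπ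

theorem splitMerge_map_singleton {w : List α} (hw : w.IsChain (fun a b => ¬ r a b)) :
    splitMerge r (w.map ([·])) = w.map ([·]) := by
  induction w with
  | nil => rfl
  | cons a w ih =>
    rcases w with _ | ⟨b, w⟩
    · rfl
    · rw [isChain_cons_cons] at hw
      simp only [map_cons] at ih ⊢
      rw [splitMerge, if_neg hw.1, ih hw.2]

theorem splitMerge_eq_self_iff {π : List (List α)} (h : IsChainBlocks r π) :
    splitMerge r π = π ↔ ∃ w : List α, w.IsChain (fun a b => ¬ r a b) ∧ π = w.map ([·]) := by
  refine ⟨fun hπ => ?_, fun ⟨w, hw, hπ⟩ => hπ ▸ splitMerge_map_singleton hw⟩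
  fun_induction List.splitMerge r π with
  | case1 x y b π => simp at hπ
  | case2 x y b π hxy => simp at hπ
  | case3 x y b π hxy ih =>
    obtain ⟨w, hw, hπw⟩ := ih (isChainBlocks_cons.1 h).2 (by simpa using hπ)
    rcases w with _ | ⟨z, w⟩
    · simp at hπw
    · simp only [map_cons, cons.injEq] at hπw
      obtain ⟨⟨rfl, rfl⟩, rfl⟩ := hπw
      exact ⟨x :: y :: w, hw.cons_cons hxy, rfl⟩
  | case4 π h₁ h₂ =>
    rcases π with _ | ⟨_ | ⟨x, _ | ⟨y, b⟩⟩, _ | ⟨_ | ⟨y, c⟩, π⟩⟩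
    · exact ⟨[], .nil, rfl⟩
    all_goals first
      | exact ⟨[_], .singleton _, rfl⟩
      | exact (h₁ _ _ _ _ rfl).elim
      | exact (h₂ _ _ _ _ rfl).elim
      | simp [isChainBlocks_cons] at h

theorem sum_neg_one_pow_length_eq_sum_filter_splitMerge [DecidableEq α]
    {s : Finset (List (List α))} (hs : ∀ π ∈ s, IsChainBlocks r π)
    (hs_splitMerge : ∀ π ∈ s, splitMerge r π ∈ s) :
    ∑ π ∈ s, (-1 : ℤ) ^ π.length = ∑ π ∈ s with splitMerge r π = π, (-1) ^ π.length := by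
  rw [← Finset.sum_filter_add_sum_filter_not s (fun π => splitMerge r π = π), add_eq_left]
  refine Finset.sum_neg_one_pow_eq_zero_of_involution _ (splitMerge r) (fun π hπ => ?_)
    (fun π hπ => splitMerge_splitMerge (hs π (Finset.mem_filter.1 hπ).1))
    (fun π hπ => length_splitMerge_of_ne (Finset.mem_filter.1 hπ).2)
  rw [Finset.mem_filter] at hπ ⊢
  refine ⟨hs_splitMerge π hπ.1, fun h => hπ.2 ?_⟩
  rw [← h, splitMerge_splitMerge (hs π hπ.1)]

end List

namespace WSub

variable {n : ℕ}

def toPair (z : WSub n) : Multiset (Fin n) × Multiset ℕ := (z.carrier.val, z.wt)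

theorem toPair_injective : Function.Injective (toPair (n := n)) := fun _ _ h =>
  WSub.ext (Finset.val_inj.1 (congrArg Prod.fst h)) (congrArg Prod.snd h)

theorem toPair_le_toPair {z z' : WSub n} : z.toPair ≤ z'.toPair ↔ z ≤ z' :=
  and_congr Finset.val_le_iff Iff.rfl

@[simp] theorem card_toPair_fst (z : WSub n) : Multiset.card z.toPair.1 = z.carrier.card := rfl

@[simp] theorem card_toPair_snd (z : WSub n) : Multiset.card z.toPair.2 = z.carrier.card :=
  z.card_eq

theorem exists_toPair_eq {z : WSub n} {p : Multiset (Fin n) × Multiset ℕ} (hp : p ≤ z.toPair)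
    (hcard : Multiset.card p.1 = Multiset.card p.2) : ∃ z' ≤ z, z'.toPair = p := by
  let z' : WSub n := ⟨⟨p.1, Multiset.nodup_of_le hp.1 z.carrier.nodup⟩, p.2, hcard.symm⟩
  exact ⟨z', toPair_le_toPair.1 hp, rfl⟩

instance : OrderBot (WSub n) where
  bot := ⟨∅, 0, rfl⟩
  bot_le _ := ⟨Finset.empty_subset _, Multiset.zero_le _⟩

theorem toPair_eq_zero {z : WSub n} : z.toPair = 0 ↔ z = ⊥ :=
  ⟨fun h => toPair_injective h, fun h => h ▸ rfl⟩

theorem card_lt_card_of_lt {z z' : WSub n} (h : z < z') : z.carrier.card < z'.carrier.card := by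
  refine Finset.card_lt_card ⟨h.le.1, fun hsub => h.ne (WSub.ext ?_ ?_)⟩
  · exact Finset.Subset.antisymm h.le.1 hsub
  · exact Multiset.eq_of_le_of_card_le h.le.2 (by
      rw [z.card_eq, z'.card_eq, Finset.Subset.antisymm h.le.1 hsub])

instance : WellFoundedLT (WSub n) :=
  StrictMono.wellFoundedLT (f := fun z : WSub n => z.carrier.card) fun _ _ => card_lt_card_of_lt

abbrev Word (n : ℕ) := List (Fin n × ℕ)

def IsBlockSeqLE (z : WSub n) (π : List (Word n)) : Prop :=
  π.IsChainBlocks IsAscent ∧ marginals π.flatten ≤ z.toPair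

def IsBlockSeq (z : WSub n) (π : List (Word n)) : Prop :=
  π.IsChainBlocks IsAscent ∧ marginals π.flatten = z.toPair

theorem length_le_of_marginals_le {z : WSub n} {w : Word n} (hw : marginals w ≤ z.toPair) :
    w.length ≤ z.carrier.card := by
  simpa using Multiset.card_le_card hw.1

theorem mem_of_marginals_le {z : WSub n} {w : Word n} (hw : marginals w ≤ z.toPair) {a : Fin n × ℕ}
    (ha : a ∈ w) : a ∈ (z.carrier ×ˢ z.wt.toFinset : Finset (Fin n × ℕ)) := by
  rw [Finset.mem_product, Multiset.mem_toFinset, ← Finset.mem_val]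
  exact ⟨Multiset.mem_of_le hw.1 (by simpa [marginals] using ⟨a.2, ha⟩),
    Multiset.mem_of_le hw.2 (by simpa [marginals] using ⟨a.1, ha⟩)⟩

theorem finite_setOf_isBlockSeqLE (z : WSub n) : {π | IsBlockSeqLE z π}.Finite := by
  let N := z.carrier.card
  have hwords := List.finite_setOf_length_le_forall_mem
    (z.carrier ×ˢ z.wt.toFinset : Finset (Fin n × ℕ)).finite_toSet N
  refine (List.finite_setOf_length_le_forall_mem hwords N).subset ?_
  rintro π ⟨hblocks, hπ⟩
  refine ⟨?_, fun b hb => ?_⟩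
  · calc π.length = (π.map List.length).length := (List.length_map _).symm
      _ ≤ (π.map List.length).sum := List.length_le_sum_of_one_le _ (by
            simpa [Nat.one_le_iff_ne_zero] using fun b hb => (hblocks b hb).1)
      _ = π.flatten.length := List.length_flatten.symm
      _ ≤ N := length_le_of_marginals_le hπ
  · have hb' := (marginals_le_of_sublist (List.sublist_flatten_of_mem hb)).trans hπ
    exact ⟨length_le_of_marginals_le hb', fun a ha => mem_of_marginals_le hb' ha⟩

theorem IsBlockSeq.isBlockSeqLE {z : WSub n} {π : List (Word n)} (h : IsBlockSeq z π) :
    IsBlockSeqLE z π :=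
  ⟨h.1, h.2.le⟩

theorem finite_setOf_isBlockSeq (z : WSub n) : {π | IsBlockSeq z π}.Finite :=
  (finite_setOf_isBlockSeqLE z).subset fun _ => IsBlockSeq.isBlockSeqLE

noncomputable def signedBlockCount (z : WSub n) : ℤ :=
  ∑ π ∈ (finite_setOf_isBlockSeq z).toFinset, (-1) ^ π.length

theorem isBlockSeq_bot_iff {π : List (Word n)} : IsBlockSeq ⊥ π ↔ π = [] := by
  refine ⟨fun h => ?_, fun h => h ▸ ⟨fun _ hb => absurd hb List.not_mem_nil, rfl⟩⟩
  have hflat := List.flatten_eq_nil_iff.1 (marginals_eq_zero.1 h.2)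
  exact List.eq_nil_iff_forall_not_mem.2 fun b hb => (h.1 b hb).1 (hflat b hb)

theorem signedBlockCount_bot : signedBlockCount (⊥ : WSub n) = 1 := by
  have : (finite_setOf_isBlockSeq (⊥ : WSub n)).toFinset = {[]} := by
    ext π
    simp [isBlockSeq_bot_iff]
  rw [signedBlockCount, this, Finset.sum_singleton, List.length_nil, pow_zero]

def toggleLastBlock (z : WSub n) (π : List (Word n)) : List (Word n) :=
  if marginals π.flatten = z.toPair then π.dropLast
  else π ++ [sortedZip (z.toPair - marginals π.flatten)]

theorem isBlockSeq_append_sortedZip {z : WSub n} {π : List (Word n)} (hπ : IsBlockSeqLE z π)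
    (hne : marginals π.flatten ≠ z.toPair) :
    IsBlockSeq z (π ++ [sortedZip (z.toPair - marginals π.flatten)]) := by
  classical
  set p := z.toPair - marginals π.flatten with hp
  have hcard : Multiset.card p.1 = Multiset.card p.2 := by
    simp only [hp, Prod.fst_sub, Prod.snd_sub]
    rw [Multiset.card_sub hπ.2.1, Multiset.card_sub hπ.2.2]
    simp
  have hsum : marginals π.flatten + p = z.toPair := add_tsub_cancel_of_le hπ.2
  have hblock : sortedZip p ≠ [] := fun h => hne <| by
    rw [← hsum, ← marginals_sortedZip hcard, h, marginals_nil, add_zero]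
  refine ⟨fun b hb => ?_, ?_⟩
  · rcases List.mem_append.1 hb with hb | hb
    · exact hπ.1 b hb
    · rw [List.mem_singleton.1 hb]
      exact ⟨hblock, isChain_sortedZip (Multiset.nodup_of_le tsub_le_self z.carrier.nodup)⟩
  · simp [marginals_sortedZip hcard, hsum]

theorem toggleLastBlock_dropLast {z : WSub n} {π : List (Word n)} (hπ : IsBlockSeq z π)
    (hz : z ≠ ⊥) :
    IsBlockSeqLE z π.dropLast ∧ marginals π.dropLast.flatten ≠ z.toPair ∧
      toggleLastBlock z π.dropLast = π := by
  obtain rfl | ⟨π, b, rfl⟩ := List.eq_nil_or_concat' π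
  · exact absurd (toPair_eq_zero.1 hπ.2.symm) hz
  have hb := hπ.1 b (by simp)
  have hsum : marginals π.flatten + marginals b = z.toPair := by simpa using hπ.2
  have hne : marginals π.flatten ≠ z.toPair := fun h =>
    hb.1 (marginals_eq_zero.1 (by rwa [h, add_eq_left] at hsum))
  rw [List.dropLast_concat]
  refine ⟨⟨fun c hc => hπ.1 c (by simp [hc]), hsum ▸ le_self_add⟩, hne, ?_⟩
  rw [toggleLastBlock, if_neg hne, ← hsum, add_tsub_cancel_left, sortedZip_marginals hb.2]

theorem toggleLastBlock_spec {z : WSub n} {π : List (Word n)} (hπ : IsBlockSeqLE z π)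
    (hz : z ≠ ⊥) :
    IsBlockSeqLE z (toggleLastBlock z π) ∧ toggleLastBlock z (toggleLastBlock z π) = π ∧
      ((toggleLastBlock z π).length = π.length + 1 ∨
        π.length = (toggleLastBlock z π).length + 1) := by
  by_cases heq : marginals π.flatten = z.toPair
  · obtain ⟨hle, hne, hinv⟩ := toggleLastBlock_dropLast ⟨hπ.1, heq⟩ hz
    rw [toggleLastBlock, if_pos heq]
    refine ⟨hle, hinv, Or.inr ?_⟩
    conv_lhs => rw [← hinv, toggleLastBlock, if_neg hne]
    simp
  · have hseq := isBlockSeq_append_sortedZip hπ heq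
    rw [toggleLastBlock, if_neg heq]
    refine ⟨hseq.isBlockSeqLE, ?_, Or.inl (by simp)⟩
    rw [toggleLastBlock, if_pos hseq.2, List.dropLast_concat]

theorem sum_signedBlockCount_eq_zero {z : WSub n} (hz : z ≠ ⊥) (s : Finset (WSub n))
    (hs : ∀ x, x ∈ s ↔ x ≤ z) : ∑ x ∈ s, signedBlockCount x = 0 := by
  classical
  have hunion : s.biUnion (fun x => (finite_setOf_isBlockSeq x).toFinset) =
      (finite_setOf_isBlockSeqLE z).toFinset := by
    ext π
    simp only [Finset.mem_biUnion, Set.Finite.mem_toFinset, Set.mem_ofPred_eq, hs]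
    constructor
    · rintro ⟨x, hxz, hπ⟩
      exact ⟨hπ.1, hπ.2 ▸ toPair_le_toPair.2 hxz⟩
    · intro hπ
      obtain ⟨x, hxz, hx⟩ := exists_toPair_eq hπ.2 (by simp)
      exact ⟨x, hxz, hπ.1, hx.symm⟩
  have hdisj : (s : Set (WSub n)).PairwiseDisjoint
      (fun x => (finite_setOf_isBlockSeq x).toFinset) := by
    intro x _ y _ hxy
    refine Finset.disjoint_left.2 fun π hx hy => hxy (toPair_injective ?_)
    rw [Set.Finite.mem_toFinset] at hx hy
    exact hx.2.symm.trans hy.2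
  simp only [signedBlockCount]
  rw [← Finset.sum_biUnion hdisj, hunion]
  refine Finset.sum_neg_one_pow_eq_zero_of_involution _ (toggleLastBlock z) (fun π hπ => ?_)
    (fun π hπ => ?_) (fun π hπ => ?_) <;>
    rw [Set.Finite.mem_toFinset] at hπ
  · exact (Set.Finite.mem_toFinset _).2 (toggleLastBlock_spec hπ hz).1
  · exact (toggleLastBlock_spec hπ hz).2.1
  · exact (toggleLastBlock_spec hπ hz).2.2

def fallingWords (z : WSub n) : Set (Word n) :=
  {w | marginals w = z.toPair ∧ w.IsChain fun a b => ¬ IsAscent a b}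

theorem IsBlockSeq.splitMerge {z : WSub n} {π : List (Word n)} (h : IsBlockSeq z π) :
    IsBlockSeq z (List.splitMerge IsAscent π) :=
  ⟨h.1.splitMerge, (List.flatten_splitMerge (r := IsAscent) π).symm ▸ h.2⟩

theorem setOf_isBlockSeq_and_splitMerge_eq_self (z : WSub n) :
    {π | IsBlockSeq z π ∧ List.splitMerge IsAscent π = π} =
      List.map (fun a => [a]) '' fallingWords z := by
  ext π
  simp only [Set.mem_ofPred_eq, Set.mem_image]
  constructor
  · rintro ⟨hπ, hfix⟩
    obtain ⟨w, hw, rfl⟩ := (List.splitMerge_eq_self_iff hπ.1).1 hfix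
    exact ⟨w, ⟨by simpa [← List.flatMap_def] using hπ.2, hw⟩, rfl⟩
  · rintro ⟨w, ⟨hw, hchain⟩, rfl⟩
    refine ⟨⟨fun b hb => ?_, by simpa [← List.flatMap_def] using hw⟩,
      List.splitMerge_map_singleton hchain⟩
    obtain ⟨a, -, rfl⟩ := List.mem_map.1 hb
    exact ⟨List.cons_ne_nil _ _, List.isChain_singleton a⟩

theorem signedBlockCount_eq (z : WSub n) :
    signedBlockCount z = (-1) ^ z.carrier.card * Nat.card (fallingWords z) := by
  classical
  set fixed := (finite_setOf_isBlockSeq z).toFinset.filter fun π => List.splitMerge IsAscent π = π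
  have hfixed : (fixed : Set (List (Word n))) = List.map (fun a => [a]) '' fallingWords z := by
    simp only [fixed, Finset.coe_filter, Set.Finite.mem_toFinset]
    exact setOf_isBlockSeq_and_splitMerge_eq_self z
  have hlength : ∀ π ∈ fixed, π.length = z.carrier.card := by
    intro π hπ
    obtain ⟨w, ⟨hw, -⟩, rfl⟩ := hfixed.subset (Finset.mem_coe.2 hπ)
    rw [List.length_map, ← card_marginals_fst, hw, card_toPair_fst]
  have hcard : fixed.card = Nat.card (fallingWords z) := by
    rw [← Set.ncard_coe_finset, hfixed,
      Set.ncard_image_of_injective _ (List.map_injective_iff.2 List.singleton_injective),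
      Nat.card_coe_set_eq]
  rw [signedBlockCount, List.sum_neg_one_pow_length_eq_sum_filter_splitMerge
      (fun π hπ => ((Set.Finite.mem_toFinset _).1 hπ).1)
      (fun π hπ => (Set.Finite.mem_toFinset _).2 ((Set.Finite.mem_toFinset _).1 hπ).splitMerge),
    Finset.sum_congr rfl fun π hπ => congrArg _ (hlength π hπ), Finset.sum_const, nsmul_eq_mul,
    hcard, mul_comm]

def coloredWord (σ : Equiv.Perm (Fin n)) (c : Fin n → ℕ) : Word n :=
  List.ofFn fun i => (σ i, c (σ i))

theorem coloredWord_injective :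
    Function.Injective fun p : Equiv.Perm (Fin n) × (Fin n → ℕ) => coloredWord p.1 p.2 := by
  rintro ⟨σ, c⟩ ⟨τ, d⟩ h
  have hi := fun i => Prod.ext_iff.1 (congrFun (List.ofFn_injective h) i)
  obtain rfl : σ = τ := Equiv.ext fun i => (hi i).1
  refine Prod.ext rfl (funext fun x => ?_)
  simpa using (hi (σ.symm x)).2

theorem marginals_coloredWord (σ : Equiv.Perm (Fin n)) (c : Fin n → ℕ) :
    marginals (coloredWord σ c) = (Finset.univ.val, content c) := by
  have hσ : ((List.ofFn σ : List (Fin n)) : Multiset (Fin n)) = Finset.univ.val := by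
    rw [← Fin.univ_val_map, Multiset.map_univ_val_equiv]
  simp only [marginals, coloredWord, List.map_ofFn, Prod.mk.injEq]
  refine ⟨hσ, ?_⟩
  rw [content, ← hσ, Multiset.map_coe, List.map_ofFn]
  rfl

theorem isChain_coloredWord_iff (σ : Equiv.Perm (Fin n)) (c : Fin n → ℕ) :
    (coloredWord σ c).IsChain (fun a b => ¬ IsAscent a b) ↔ ¬ HasAscent σ c := by
  simp [List.isChain_iff_getElem, HasAscent, coloredWord, IsAscent]

theorem exists_coloredWord {w : Word n} (hw : (marginals w).1 = Finset.univ.val) :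
    ∃ σ c, coloredWord σ c = w := by
  have hlen : w.length = n := by simpa using congrArg Multiset.card hw
  have hnodup : (w.map Prod.fst).Nodup := by
    rw [← Multiset.coe_nodup]
    exact (show (marginals w).1.Nodup from hw ▸ Finset.univ.nodup)
  let f : Fin n → Fin n := fun i => w[i.1].1
  have hf : Function.Injective f := fun i j hij => Fin.ext <| by
    simpa [f] using (hnodup.getElem_inj_iff (i := i.1) (j := j.1)
      (hi := by simp [hlen]) (hj := by simp [hlen])).1 (by simpa using hij)
  let σ := Equiv.ofBijective f (Finite.injective_iff_bijective.1 hf)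
  refine ⟨σ, fun x => w[(σ.symm x).1].2, List.ext_getElem (by simp [coloredWord, hlen]) ?_⟩
  intro i h₁ h₂
  simp [coloredWord, σ, f]

theorem image_coloredWord {z : WSub n} (hz : z.carrier = Finset.univ) :
    (fun p : Equiv.Perm (Fin n) × (Fin n → ℕ) => coloredWord p.1 p.2) ''
      {p | content p.2 = z.wt ∧ ¬ HasAscent p.1 p.2} = fallingWords z := by
  ext w
  simp only [Set.mem_image, Set.mem_ofPred_eq, fallingWords]
  constructor
  · rintro ⟨⟨σ, c⟩, ⟨hc, hasc⟩, rfl⟩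
    refine ⟨?_, (isChain_coloredWord_iff σ c).2 hasc⟩
    rw [marginals_coloredWord, toPair, hz, hc]
  · rintro ⟨hw, hchain⟩
    obtain ⟨σ, c, rfl⟩ := exists_coloredWord (by rw [hw, toPair, hz])
    rw [marginals_coloredWord, toPair, hz, Prod.mk.injEq] at hw
    exact ⟨(σ, c), ⟨hw.2, (isChain_coloredWord_iff σ c).1 hchain⟩, rfl⟩

theorem card_fallingWords {z : WSub n} (hz : z.carrier = Finset.univ) :
    Nat.card (fallingWords z) = Nat.card {p : Equiv.Perm (Fin n) × (Fin n → ℕ) //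
      content p.2 = z.wt ∧ ¬ HasAscent p.1 p.2} := by
  rw [← image_coloredWord hz, Nat.card_image_of_injective coloredWord_injective]
  rfl

end WSub

theorem moebius_of_maximal_interval (n : ℕ) (μ : Multiset ℕ)
    (hμ : Multiset.card μ = n)
    (S : WSub n → WSub n → Finset (WSub n))
    (hS : ∀ x y z : WSub n, z ∈ S x y ↔ x ≤ z ∧ z ≤ y)
    (f : WSub n → WSub n → ℤ)
    (hrefl : ∀ x : WSub n, f x x = 1)
    (hrec : ∀ x y : WSub n, x < y → ∑ z ∈ S x y, f x z = 0) :
    f (⟨∅, 0, by simp⟩ : WSub n) (⟨Finset.univ, μ, by simp [hμ]⟩ : WSub n) =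
      (-1) ^ n *
        (Nat.card {w : Equiv.Perm (Fin n) × (Fin n → ℕ) //
          content w.2 = μ ∧ ¬ HasAscent w.1 w.2} : ℤ) := by
  have hIic : ∀ y z : WSub n, z ∈ S ⊥ y ↔ z ≤ y := fun y z => by simp [hS]
  have hmoebius : ∀ y, f ⊥ y = WSub.signedBlockCount y :=
    eq_of_sum_Iic_eq_zero (S ⊥) hIic (by rw [hrefl, WSub.signedBlockCount_bot])
      (fun y hy => hrec ⊥ y (bot_lt_iff_ne_bot.2 hy))
      (fun y hy => WSub.sum_signedBlockCount_eq_zero hy _ (hIic y))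
  refine (hmoebius _).trans ?_
  rw [WSub.signedBlockCount_eq, WSub.card_fallingWords rfl]
  simp only [Finset.card_fin]
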